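/- arXiv:0907.0931 — 4 statements merged into one kernel-verified Lean document; each statement's English description precedes it below -/
import Mathlib

section
/- Let A be a real m×n matrix with rank n and let aᵢ ∈ ℝⁿ denote the i-th row of A. On the open positive orthant, the function f(z) = log det(Aᵀ·diag(z)·A) is twice differentiable and its second partial derivative satisfies ∂²f/∂zᵢ∂zⱼ = −(aᵢᵀ·X·aⱼ)², i.e. the Hessian of f at z equals −(A·X·Aᵀ) ∘ (A·X·Aᵀ), the negated elementwise (Hadamard) square of A·X·Aᵀ, where X = (Aᵀ·diag(z)·A)⁻¹. -/
/-!
Write `G w = Aᵀ * diagonal w * A = ∑ₖ wₖ • aₖ aₖᵀ`. By the matrix determinant lemma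
`det (G + t • aⱼ aⱼᵀ) = det G * (1 + t * aⱼᵀ G⁻¹ aⱼ)`, so `∂ⱼ log det G = aⱼᵀ G⁻¹ aⱼ` wherever
`G` is invertible. Differentiating this again, with `d(G⁻¹)[H] = -G⁻¹ H G⁻¹` and `H = aᵢ aᵢᵀ`,
gives `-(aⱼᵀ X aᵢ) (aᵢᵀ X aⱼ) = -(aᵢᵀ X aⱼ)²`, since `X = G⁻¹` is symmetric. On the positive
orthant `G` is positive definite, hence invertible, because `A` has full column rank.
-/

open Matrix

namespace Matrix

variable {ι κ l α : Type*}

theorem mul_mul_transpose_apply [Fintype κ] [NonUnitalCommSemiring α] (A : Matrix ι κ α)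
    (X : Matrix κ κ α) (B : Matrix l κ α) (i : ι) (j : l) :
    (A * X * Bᵀ) i j = A i ⬝ᵥ X *ᵥ B j := by
  rw [Matrix.mul_assoc]
  simp [mul_apply, dotProduct, mulVec, Finset.mul_sum]

theorem dotProduct_mul_vecMulVec_mul_mulVec [Fintype κ] [CommSemiring α] (X Y : Matrix κ κ α)
    (a b c d : κ → α) : a ⬝ᵥ (X * vecMulVec b c * Y) *ᵥ d = (a ⬝ᵥ X *ᵥ b) * (c ⬝ᵥ Y *ᵥ d) := by
  rw [← mulVec_mulVec, ← mulVec_mulVec, vecMulVec_mulVec, mulVec_smul, dotProduct_smul]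
  simp

theorem det_add_vecMulVec [Fintype κ] [DecidableEq κ] [CommRing α] {M : Matrix κ κ α}
    (hM : IsUnit M.det) (u v : κ → α) : (M + vecMulVec u v).det = M.det * (1 + v ⬝ᵥ M⁻¹ *ᵥ u) := by
  rw [vecMulVec_eq Unit, det_add_replicateCol_mul_replicateRow hM, det_unique (n := Unit),
    dotProduct_mulVec]
  simp [mul_apply, vecMul, dotProduct]

theorem transpose_mul_diagonal_single_mul [Fintype ι] [DecidableEq ι] [Semiring α]
    (A : Matrix ι κ α) (i : ι) :
    Aᵀ * diagonal (Pi.single i (1 : α)) * A = vecMulVec (A i) (A i) := by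
  ext p q
  simp [mul_apply, diagonal, Pi.single_apply, vecMulVec]

theorem mulVec_injective_of_rank_eq [Fintype ι] [Fintype κ] [Field α] {A : Matrix ι κ α}
    (hA : A.rank = Fintype.card κ) : Function.Injective A.mulVec := by
  rw [mulVec_injective_iff, linearIndependent_iff_card_eq_finrank_span, Set.finrank,
    ← rank_eq_finrank_span_cols, hA]

theorem posDef_transpose_mul_diagonal_mul [Fintype ι] [Fintype κ] [DecidableEq ι]
    {A : Matrix ι κ ℝ} (hA : Function.Injective A.mulVec) {w : ι → ℝ} (hw : ∀ i, 0 < w i) :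
    (Aᵀ * diagonal w * A).PosDef := by
  simpa using (PosDef.diagonal hw).conjTranspose_mul_mul_same hA

theorem isSymm_transpose_mul_diagonal_mul [Fintype ι] [DecidableEq ι] [CommSemiring α]
    (A : Matrix ι κ α) (w : ι → α) : (Aᵀ * diagonal w * A).IsSymm := by
  simp [IsSymm, transpose_mul, Matrix.mul_assoc]

theorem IsSymm.dotProduct_mulVec_comm [Fintype κ] [CommSemiring α] {X : Matrix κ κ α}
    (hX : X.IsSymm) (a b : κ → α) : a ⬝ᵥ X *ᵥ b = b ⬝ᵥ X *ᵥ a := by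
  rw [dotProduct_mulVec, ← mulVec_transpose, hX.eq, dotProduct_comm]

variable [Fintype ι] [DecidableEq ι] [CommSemiring α]

def weightedGram (A : Matrix ι κ α) : (ι → α) →ₗ[α] Matrix κ κ α where
  toFun w := Aᵀ * diagonal w * A
  map_add' v w := by
    rw [show diagonal (v + w) = diagonal v + diagonal w from (diagonal_add v w).symm,
      Matrix.mul_add, Matrix.add_mul]
  map_smul' c w := by rw [RingHom.id_apply, diagonal_smul, Matrix.mul_smul, Matrix.smul_mul]

theorem weightedGram_apply (A : Matrix ι κ α) (w : ι → α) :
    weightedGram A w = Aᵀ * diagonal w * A := rfl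

end Matrix

section Calculus

variable {κ : Type*} [Fintype κ] [DecidableEq κ]

theorem ContDiff.matrix_det {𝕜 E : Type*} [NontriviallyNormedField 𝕜] [NormedAddCommGroup E]
    [NormedSpace 𝕜 E] {N : WithTop ℕ∞} {M : E → Matrix κ κ 𝕜}
    (hM : ∀ i j, ContDiff 𝕜 N fun x => M x i j) : ContDiff 𝕜 N fun x => (M x).det := by
  simp only [det_apply, Units.smul_def]
  exact ContDiff.sum fun σ _ => (contDiff_prod fun i _ => hM _ _).const_smul _

theorem hasDerivAt_log_det_add_smul_vecMulVec {M : Matrix κ κ ℝ} (hM : M.det ≠ 0)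
    (u v : κ → ℝ) :
    HasDerivAt (fun t : ℝ => Real.log (M + t • vecMulVec u v).det) (v ⬝ᵥ M⁻¹ *ᵥ u) 0 := by
  set c := v ⬝ᵥ M⁻¹ *ᵥ u
  have hdet (t : ℝ) : (M + t • vecMulVec u v).det = M.det * (1 + t * c) := by
    rw [← smul_vecMulVec, det_add_vecMulVec hM.isUnit, mulVec_smul, dotProduct_smul, smul_eq_mul]
  have hline : HasDerivAt (fun t : ℝ => M.det * (1 + t * c)) (M.det * c) 0 := by
    simpa using (((hasDerivAt_id (0 : ℝ)).mul_const c).const_add 1).const_mul M.det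
  simp only [hdet]
  convert hline.log (by simpa using hM) using 1
  field_simp
  ring

section NormedMatrix

-- Matrices have no global norm; the choice made here does not show in the statement of
-- `fderiv_dotProduct_nonsing_inv_mulVec`, which involves no norm on matrices.
attribute [local instance] Matrix.linftyOpNormedAddCommGroup Matrix.linftyOpNormedRing
  Matrix.linftyOpNormedAlgebra

variable {𝕜 : Type*} [RCLike 𝕜]

theorem hasFDerivAt_nonsing_inv {M : Matrix κ κ 𝕜} (hM : IsUnit M.det) :
    HasFDerivAt (fun N : Matrix κ κ 𝕜 => N⁻¹)
      (-ContinuousLinearMap.mulLeftRight 𝕜 _ M⁻¹ M⁻¹) M := by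
  obtain ⟨U, rfl⟩ := (isUnit_iff_isUnit_det M).mpr hM
  rw [← coe_units_inv]
  simpa only [funext nonsing_inv_eq_ringInverse] using hasFDerivAt_ringInverse (𝕜 := 𝕜) U

theorem fderiv_dotProduct_nonsing_inv_mulVec {E : Type*} [NormedAddCommGroup E] [NormedSpace 𝕜 E]
    [FiniteDimensional 𝕜 E] (L : E →ₗ[𝕜] Matrix κ κ 𝕜) {x : E} (hx : IsUnit (L x).det)
    (a b : κ → 𝕜) (h : E) :
    fderiv 𝕜 (fun y => a ⬝ᵥ (L y)⁻¹ *ᵥ b) x h = -(a ⬝ᵥ ((L x)⁻¹ * L h * (L x)⁻¹) *ᵥ b) := by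
  let q : Matrix κ κ 𝕜 →L[𝕜] 𝕜 := LinearMap.toContinuousLinearMap
    { toFun := fun N => a ⬝ᵥ N *ᵥ b
      map_add' := fun N N' => by simp [add_mulVec]
      map_smul' := fun c N => by simp [smul_mulVec] }
  have hderiv : HasFDerivAt (fun y => a ⬝ᵥ (L y)⁻¹ *ᵥ b) _ x :=
    q.hasFDerivAt.comp x ((hasFDerivAt_nonsing_inv hx).comp x
      (LinearMap.toContinuousLinearMap L).hasFDerivAt)
  rw [hderiv.fderiv]
  change a ⬝ᵥ (-((L x)⁻¹ * L h * (L x)⁻¹)) *ᵥ b = _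
  rw [neg_mulVec, dotProduct_neg]

end NormedMatrix

end Calculus

section LogDetWeightedGram

variable {ι κ : Type*} [Fintype ι] [Fintype κ] [DecidableEq ι] [DecidableEq κ]
  (A : Matrix ι κ ℝ)

theorem contDiff_det_weightedGram {N : WithTop ℕ∞} :
    ContDiff ℝ N fun w : ι → ℝ => (Aᵀ * diagonal w * A).det := by
  refine ContDiff.matrix_det fun p q => ?_
  simp only [mul_apply, transpose_apply, diagonal_apply, mul_ite, mul_zero,
    Finset.sum_ite_eq', Finset.mem_univ, if_true]
  fun_prop

theorem contDiffAt_log_det_weightedGram {N : WithTop ℕ∞} {w : ι → ℝ}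
    (hw : (Aᵀ * diagonal w * A).det ≠ 0) :
    ContDiffAt ℝ N (fun v : ι → ℝ => Real.log (Aᵀ * diagonal v * A).det) w :=
  (Real.contDiffAt_log.mpr hw).comp w (contDiff_det_weightedGram A).contDiffAt

theorem fderiv_log_det_weightedGram_single {w : ι → ℝ} (hw : (Aᵀ * diagonal w * A).det ≠ 0)
    (j : ι) :
    fderiv ℝ (fun v : ι → ℝ => Real.log (Aᵀ * diagonal v * A).det) w (Pi.single j 1) =
      A j ⬝ᵥ (Aᵀ * diagonal w * A)⁻¹ *ᵥ A j := by
  have hline : HasLineDerivAt ℝ (fun v : ι → ℝ => Real.log (Aᵀ * diagonal v * A).det)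
      (A j ⬝ᵥ (Aᵀ * diagonal w * A)⁻¹ *ᵥ A j) w (Pi.single j 1) := by
    have h := hasDerivAt_log_det_add_smul_vecMulVec hw (A j) (A j)
    simp only [← transpose_mul_diagonal_single_mul, ← weightedGram_apply, ← map_smul,
      ← map_add] at h
    exact h
  rw [← ((contDiffAt_log_det_weightedGram A (N := 1) hw).differentiableAt one_ne_zero
    ).lineDeriv_eq_fderiv, hline.lineDeriv]

theorem fderiv_fderiv_log_det_weightedGram_single {z : ι → ℝ}
    (hz : (Aᵀ * diagonal z * A).det ≠ 0) (i j : ι) :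
    fderiv ℝ (fun w : ι → ℝ =>
        fderiv ℝ (fun v : ι → ℝ => Real.log (Aᵀ * diagonal v * A).det) w (Pi.single j 1)) z
        (Pi.single i 1) =
      -((A * (Aᵀ * diagonal z * A)⁻¹ * Aᵀ) i j) ^ 2 := by
  have hunit : ∀ᶠ w in nhds z, (Aᵀ * diagonal w * A).det ≠ 0 :=
    (contDiff_det_weightedGram A (N := 0)).continuous.continuousAt.eventually_ne hz
  have hgrad : (fun w : ι → ℝ =>
        fderiv ℝ (fun v : ι → ℝ => Real.log (Aᵀ * diagonal v * A).det) w (Pi.single j 1))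
      =ᶠ[nhds z] fun w => A j ⬝ᵥ (weightedGram A w)⁻¹ *ᵥ A j :=
    hunit.mono fun w hw => fderiv_log_det_weightedGram_single A hw j
  rw [hgrad.fderiv_eq, fderiv_dotProduct_nonsing_inv_mulVec _ hz.isUnit, weightedGram_apply,
    weightedGram_apply, transpose_mul_diagonal_single_mul, dotProduct_mul_vecMulVec_mul_mulVec,
    ((isSymm_transpose_mul_diagonal_mul A z).inv).dotProduct_mulVec_comm (A j),
    mul_mul_transpose_apply, sq]

end LogDetWeightedGram

theorem stmt_6 {m n : ℕ} (A : Matrix (Fin m) (Fin n) ℝ) (hA : A.rank = n)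
    (z : Fin m → ℝ) (hz : ∀ j, 0 < z j) :
    ContDiffAt ℝ 2
        (fun w : Fin m → ℝ => Real.log (Aᵀ * Matrix.diagonal w * A).det) z ∧
      ∀ i j : Fin m,
        fderiv ℝ
            (fun w : Fin m → ℝ =>
              fderiv ℝ (fun v : Fin m → ℝ =>
                  Real.log (Aᵀ * Matrix.diagonal v * A).det) w (Pi.single j 1)) z
            (Pi.single i 1) =
          -((A * (Aᵀ * Matrix.diagonal z * A)⁻¹ * Aᵀ) i j) ^ 2 := by
  have hdet : (Aᵀ * diagonal z * A).det ≠ 0 :=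
    (posDef_transpose_mul_diagonal_mul (mulVec_injective_of_rank_eq (by simpa using hA))
      hz).det_pos.ne'
  exact ⟨contDiffAt_log_det_weightedGram A hdet,
    fderiv_fderiv_log_det_weightedGram_single A hdet⟩
end

section
/- Let A be a real m×n matrix with rank n. The function z ↦ log det(Aᵀ·diag(z)·A) is concave on the open positive orthant: for all z, w ∈ ℝᵐ with all entries strictly positive and all t ∈ [0,1], log det(Aᵀ·diag(t·z + (1−t)·w)·A) ≥ t·log det(Aᵀ·diag(z)·A) + (1−t)·log det(Aᵀ·diag(w)·A). -/
/-!
Because `A` has full column rank, `Aᵀ * diagonal z * A` is positive definite for positive `z`,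
and it depends linearly on `z`; so it suffices that `log det` is concave on positive definite
matrices. Writing `Q = S * S` with `S = √Q` and `M = S⁻¹ * P * S⁻¹`, we get
`det (t • P + (1 - t) • Q) = det Q * det (t • M + (1 - t) • 1)`, and diagonalising `M` reduces
`det M ^ t ≤ det (t • M + (1 - t) • 1)` to the weighted AM–GM inequality `λ ^ t ≤ t * λ + (1 - t)`
for each eigenvalue `λ` of `M`.
-/

open Matrix

namespace Matrix

variable {n : Type*} [Fintype n]

theorem mulVec_injective_of_rank_eq_card {m K : Type*} [Field K] {A : Matrix m n K}
    (hA : A.rank = Fintype.card n) : Function.Injective A.mulVec := by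
  rw [← coe_mulVecLin, ← LinearMap.ker_eq_bot, ← Submodule.finrank_eq_zero]
  have := LinearMap.finrank_range_add_finrank_ker A.mulVecLin
  rw [← rank, hA, Module.finrank_fintype_fun_eq_card] at this
  omega

variable [DecidableEq n]

theorem IsHermitian.det_cfc {𝕜 : Type*} [RCLike 𝕜] {A : Matrix n n 𝕜} (hA : A.IsHermitian)
    (f : ℝ → ℝ) : (cfc f A).det = ∏ i, (f (hA.eigenvalues i) : 𝕜) := by
  simp [hA.cfc_eq, IsHermitian.cfc, -Unitary.conjStarAlgAut_apply]

theorem PosDef.det_rpow_le_det_smul_add_smul_one {M : Matrix n n ℝ} (hM : M.PosDef)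
    {t : ℝ} (ht₀ : 0 ≤ t) (ht₁ : t ≤ 1) :
    M.det ^ t ≤ (t • M + (1 - t) • (1 : Matrix n n ℝ)).det := by
  have hev := hM.eigenvalues_pos
  have hcfc : t • M + (1 - t) • (1 : Matrix n n ℝ) = cfc (fun x => t * x + (1 - t)) M := by
    rw [cfc_add .., cfc_const_mul_id t M hM.1.isSelfAdjoint, cfc_const _ M hM.1.isSelfAdjoint,
      Algebra.algebraMap_eq_smul_one]
  rw [hcfc, hM.1.det_cfc, hM.1.det_eq_prod_eigenvalues]
  simp only [RCLike.ofReal_real_eq_id, id_eq]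
  rw [← Real.finsetProd_rpow _ _ fun i _ => (hev i).le]
  refine Finset.prod_le_prod (fun i _ => Real.rpow_nonneg (hev i).le t) fun i _ => ?_
  simpa using Real.geom_mean_le_arith_mean2_weighted ht₀ (sub_nonneg.2 ht₁) (hev i).le
    zero_le_one (add_sub_cancel t 1)

open scoped MatrixOrder in
theorem PosDef.det_rpow_mul_det_rpow_le_det_smul_add_smul {P Q : Matrix n n ℝ} (hP : P.PosDef)
    (hQ : Q.PosDef) {t : ℝ} (ht₀ : 0 ≤ t) (ht₁ : t ≤ 1) :
    P.det ^ t * Q.det ^ (1 - t) ≤ (t • P + (1 - t) • Q).det := by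
  set S := CFC.sqrt Q
  have hS : S.PosDef :=
    isStrictlyPositive_iff_posDef.1 (IsStrictlyPositive.sqrt Q hQ.isStrictlyPositive)
  have hSS : S * S = Q := CFC.sqrt_mul_sqrt_self Q hQ.posSemidef.nonneg
  set M := S⁻¹ * P * S⁻¹
  have hM : M.PosDef := by
    simpa only [hS.inv.1.eq] using
      hP.conjTranspose_mul_mul_same (mulVec_injective_iff_isUnit.2 hS.inv.isUnit)
  have hP_eq : P = S * M * S := by
    have hSdet : IsUnit S.det := hS.det_pos.ne'.isUnit
    simp only [M, Matrix.mul_assoc, nonsing_inv_mul _ hSdet, mul_nonsing_inv_cancel_left _ _ hSdet,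
      Matrix.mul_one]
  have hcomb : t • P + (1 - t) • Q = S * (t • M + (1 - t) • (1 : Matrix n n ℝ)) * S := by
    rw [hP_eq, ← hSS]
    simp only [Matrix.mul_add, Matrix.add_mul, Matrix.mul_smul, Matrix.smul_mul, Matrix.mul_one]
  have hQdet : Q.det = S.det * S.det := by rw [← hSS, det_mul]
  have hPdet : P.det = Q.det * M.det := by rw [hP_eq, det_mul, det_mul, hQdet]; ring
  calc P.det ^ t * Q.det ^ (1 - t)
      = Q.det * M.det ^ t := by
        rw [hPdet, Real.mul_rpow hQ.det_pos.le hM.det_pos.le, mul_right_comm,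
          ← Real.rpow_add hQ.det_pos, add_sub_cancel, Real.rpow_one]
    _ ≤ Q.det * (t • M + (1 - t) • (1 : Matrix n n ℝ)).det :=
        mul_le_mul_of_nonneg_left (hM.det_rpow_le_det_smul_add_smul_one ht₀ ht₁) hQ.det_pos.le
    _ = (t • P + (1 - t) • Q).det := by rw [hcomb, det_mul, det_mul, hQdet]; ring

theorem PosDef.mul_log_det_add_mul_log_det_le_log_det_smul_add_smul {P Q : Matrix n n ℝ}
    (hP : P.PosDef) (hQ : Q.PosDef) {t : ℝ} (ht₀ : 0 ≤ t) (ht₁ : t ≤ 1) :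
    t * Real.log P.det + (1 - t) * Real.log Q.det ≤ Real.log (t • P + (1 - t) • Q).det := by
  have hPdet := hP.det_pos
  have hQdet := hQ.det_pos
  rw [← Real.log_rpow hPdet, ← Real.log_rpow hQdet, ← Real.log_mul (by positivity) (by positivity)]
  exact Real.log_le_log (by positivity) (hP.det_rpow_mul_det_rpow_le_det_smul_add_smul hQ ht₀ ht₁)

end Matrix

theorem stmt_8 {m n : ℕ} (A : Matrix (Fin m) (Fin n) ℝ) (hA : A.rank = n)
    (z w : Fin m → ℝ) (hz : ∀ i, 0 < z i) (hw : ∀ i, 0 < w i)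
    (t : ℝ) (ht : t ∈ Set.Icc (0 : ℝ) 1) :
    t * Real.log (Aᵀ * Matrix.diagonal z * A).det +
        (1 - t) * Real.log (Aᵀ * Matrix.diagonal w * A).det ≤
      Real.log (Aᵀ * Matrix.diagonal (t • z + (1 - t) • w) * A).det := by
  have hinj : Function.Injective A.mulVec :=
    mulVec_injective_of_rank_eq_card (by rwa [Fintype.card_fin])
  have hposDef {d : Fin m → ℝ} (hd : ∀ i, 0 < d i) : (Aᵀ * diagonal d * A).PosDef := by
    simpa using (PosDef.diagonal hd).conjTranspose_mul_mul_same hinj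
  have hdiag : diagonal (t • z + (1 - t) • w) = t • diagonal z + (1 - t) • diagonal w := by
    rw [← diagonal_smul, ← diagonal_smul, diagonal_add]
    rfl
  rw [hdiag, Matrix.mul_add, Matrix.add_mul, Matrix.mul_smul, Matrix.mul_smul, Matrix.smul_mul,
    Matrix.smul_mul]
  exact (hposDef hz).mul_log_det_add_mul_log_det_le_log_det_smul_add_smul (hposDef hw) ht.1 ht.2
end

section
/- Let X be a real symmetric positive definite n×n matrix with n ≥ 1. Then log det X ≤ tr X − n, with equality if and only if X is the identity matrix. -/
/-!
Diagonalise `X`: with eigenvalues `λᵢ > 0`, `log det X - (tr X - n) = ∑ (log λᵢ - (λᵢ - 1))`,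
and each term is `≤ 0` by `log x ≤ x - 1`, with equality only at `x = 1`. All eigenvalues
equal to `1` forces `X = 1` by the spectral theorem.
-/

theorem Real.log_eq_sub_one_iff {x : ℝ} (hx : 0 < x) : Real.log x = x - 1 ↔ x = 1 := by
  refine ⟨fun h ↦ ?_, fun h ↦ by simp [h]⟩
  by_contra hne
  exact (Real.log_lt_sub_one_of_pos hx hne).ne h

theorem Real.sum_log_eq_sum_sub_one_iff {ι : Type*} {s : Finset ι} {f : ι → ℝ}
    (hf : ∀ i ∈ s, 0 < f i) :
    ∑ i ∈ s, Real.log (f i) = ∑ i ∈ s, (f i - 1) ↔ ∀ i ∈ s, f i = 1 := by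
  rw [Finset.sum_eq_sum_iff_of_le fun i hi ↦ Real.log_le_sub_one_of_pos (hf i hi)]
  exact forall₂_congr fun i hi ↦ Real.log_eq_sub_one_iff (hf i hi)

namespace Matrix

variable {𝕜 n : Type*} [RCLike 𝕜] [Fintype n] [DecidableEq n]

theorem IsHermitian.eq_one_of_eigenvalues_eq_one {A : Matrix n n 𝕜} (hA : A.IsHermitian)
    (h : ∀ i, hA.eigenvalues i = 1) : A = 1 := by
  rw [hA.spectral_theorem, funext h, Function.comp_def]
  simp only [map_one, diagonal_one]

theorem PosDef.log_det_eq_sum_log_eigenvalues {A : Matrix n n ℝ} (hA : A.PosDef) :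
    Real.log A.det = ∑ i, Real.log (hA.isHermitian.eigenvalues i) := by
  rw [hA.isHermitian.det_eq_prod_eigenvalues, RCLike.ofReal_real_eq_id]
  exact Real.log_prod fun i _ ↦ (hA.eigenvalues_pos i).ne'

theorem IsHermitian.trace_sub_card_eq_sum {A : Matrix n n ℝ} (hA : A.IsHermitian) :
    A.trace - Fintype.card n = ∑ i, (hA.eigenvalues i - 1) := by
  simp [hA.trace_eq_sum_eigenvalues, Finset.sum_sub_distrib]

end Matrix

theorem stmt_15_general {n : ℕ} (X : Matrix (Fin n) (Fin n) ℝ)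
    (hX : X.PosDef) :
    Real.log X.det ≤ X.trace - (n : ℝ) ∧
      (Real.log X.det = X.trace - (n : ℝ) ↔ X = 1) := by
  have hpos : ∀ i ∈ Finset.univ, 0 < hX.isHermitian.eigenvalues i :=
    fun i _ ↦ hX.eigenvalues_pos i
  have htr := hX.isHermitian.trace_sub_card_eq_sum
  rw [Fintype.card_fin] at htr
  refine ⟨?_, fun h ↦ ?_, by rintro rfl; simp⟩
  · rw [hX.log_det_eq_sum_log_eigenvalues, htr]
    exact Finset.sum_le_sum fun i hi ↦ Real.log_le_sub_one_of_pos (hpos i hi)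
  · rw [hX.log_det_eq_sum_log_eigenvalues, htr, Real.sum_log_eq_sum_sub_one_iff hpos] at h
    exact hX.isHermitian.eq_one_of_eigenvalues_eq_one fun i ↦ h i (Finset.mem_univ i)

theorem stmt_15 {n : ℕ} (hn : 1 ≤ n) (X : Matrix (Fin n) (Fin n) ℝ)
    (hX : X.PosDef) :
    Real.log X.det ≤ X.trace - (n : ℝ) ∧
      (Real.log X.det = X.trace - (n : ℝ) ↔ X = 1) :=
  stmt_15_general X hX
end

section
/- (Weak duality between MVEE and the relaxed sensor selection problem) Let A be a real m×n matrix with rows aᵢ ∈ ℝⁿ. Let M be a real symmetric positive definite n×n matrix with aᵢᵀ·M·aᵢ ≤ 1 for all i (i.e. M is feasible for the minimum volume enclosing ellipsoid problem), and let z ∈ ℝᵐ satisfy zᵢ ≥ 0 for all i, Σᵢ zᵢ = n, and Aᵀ·diag(z)·A positive definite. Then log det(Aᵀ·diag(z)·A) ≤ −log det M; equivalently, det(M)·det(Aᵀ·diag(z)·A) ≤ 1. -/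
/-! Write the positive semidefinite `M` as `Bᴴ B`. Then `det M · det P = det (B P Bᴴ)`, where
`P = Aᵀ diag(z) A`, and `B P Bᴴ` is positive semidefinite with trace
`tr (P M) = ∑ zᵢ aᵢᵀ M aᵢ ≤ ∑ zᵢ = n`. A positive semidefinite `n × n` matrix of trace at most `n`
has determinant at most `1`: its eigenvalues satisfy `λ ≤ exp (λ - 1)`, so their product is at
most `exp (tr - n) ≤ 1`. -/

open Matrix

theorem Finset.prod_le_one_of_sum_le_card {ι : Type*} {s : Finset ι} {x : ι → ℝ}
    (hx : ∀ i ∈ s, 0 ≤ x i) (hsum : ∑ i ∈ s, x i ≤ s.card) : ∏ i ∈ s, x i ≤ 1 :=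
  calc ∏ i ∈ s, x i ≤ ∏ i ∈ s, Real.exp (x i - 1) :=
        Finset.prod_le_prod hx fun i _ => by linarith [Real.add_one_le_exp (x i - 1)]
    _ = Real.exp (∑ i ∈ s, x i - s.card) := by
        rw [← Real.exp_sum, Finset.sum_sub_distrib]; simp
    _ ≤ 1 := Real.exp_le_one_iff.2 (by linarith)

namespace Matrix

variable {m n : Type*} [Fintype m] [Fintype n]

theorem PosSemidef.det_le_one_of_trace_le_card [DecidableEq n] {Q : Matrix n n ℝ}
    (hQ : Q.PosSemidef) (htr : Q.trace ≤ Fintype.card n) : Q.det ≤ 1 := by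
  rw [hQ.isHermitian.det_eq_prod_eigenvalues]
  rw [hQ.isHermitian.trace_eq_sum_eigenvalues] at htr
  simp only [RCLike.ofReal_real_eq_id, id] at htr ⊢
  exact Finset.prod_le_one_of_sum_le_card (fun i _ => hQ.eigenvalues_nonneg i) htr

theorem det_mul_det_le_one_of_trace_mul_le_card [DecidableEq n] {M P : Matrix n n ℝ}
    (hM : M.PosSemidef) (hP : P.PosSemidef) (htr : (P * M).trace ≤ Fintype.card n) :
    M.det * P.det ≤ 1 := by
  open scoped MatrixOrder in
  obtain ⟨B, rfl⟩ := CStarAlgebra.nonneg_iff_eq_star_mul_self.mp hM.nonneg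
  rw [star_eq_conjTranspose] at htr ⊢
  have hdet : (Bᴴ * B).det * P.det = (B * P * Bᴴ).det := by
    simp only [det_mul]; ring
  have htrace : (P * (Bᴴ * B)).trace = (B * P * Bᴴ).trace := by
    rw [← Matrix.mul_assoc, trace_mul_comm, Matrix.mul_assoc]
  rw [hdet]
  exact (hP.mul_mul_conjTranspose_same B).det_le_one_of_trace_le_card (htrace ▸ htr)

theorem trace_transpose_mul_diagonal_mul_mul {R : Type*} [CommRing R] [DecidableEq m]
    (A : Matrix m n R) (z : m → R) (M : Matrix n n R) :
    (Aᵀ * diagonal z * A * M).trace = ∑ i, z i * (A i ⬝ᵥ M *ᵥ A i) := by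
  rw [Matrix.mul_assoc, Matrix.mul_assoc, trace_mul_comm, Matrix.mul_assoc]
  simp only [trace, diag, diagonal_mul]
  refine Finset.sum_congr rfl fun i _ => congrArg (z i * ·) ?_
  rw [dotProduct_mulVec]
  rfl

end Matrix

theorem stmt_17 {m n : ℕ} (A : Matrix (Fin m) (Fin n) ℝ)
    (M : Matrix (Fin n) (Fin n) ℝ) (hM : M.PosDef)
    (hMfeas : ∀ i, A i ⬝ᵥ M *ᵥ A i ≤ 1)
    (z : Fin m → ℝ) (hz : ∀ i, 0 ≤ z i) (hsum : ∑ i, z i = (n : ℝ))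
    (hP : (Aᵀ * Matrix.diagonal z * A).PosDef) :
    Real.log (Aᵀ * Matrix.diagonal z * A).det ≤ -Real.log M.det ∧
      M.det * (Aᵀ * Matrix.diagonal z * A).det ≤ 1 := by
  set P := Aᵀ * Matrix.diagonal z * A
  have htr : (P * M).trace ≤ Fintype.card (Fin n) := by
    rw [trace_transpose_mul_diagonal_mul_mul, Fintype.card_fin, ← hsum]
    exact Finset.sum_le_sum fun i _ => mul_le_of_le_one_right (hz i) (hMfeas i)
  have hdet : M.det * P.det ≤ 1 :=
    det_mul_det_le_one_of_trace_mul_le_card hM.posSemidef hP.posSemidef htr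
  have hlog := Real.log_nonpos (mul_pos hM.det_pos hP.det_pos).le hdet
  rw [Real.log_mul hM.det_pos.ne' hP.det_pos.ne'] at hlog
  exact ⟨by linarith, hdet⟩
end
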